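/- Quantitative no-go bound, mixed target state (analytic core of Theorem 4.1): Let N ≥ 1 be a natural number, let ρ, φ be density matrices on ℂ^d with (1/2)·‖ρ − φ‖₁ = 2/(9N), and let M be a Hermitian matrix on (ℂ^d)^{⊗N} with 0 ≤ M ≤ I in the Loewner order. Then (1 − Tr(M·φ^{⊗N})) + (1/(9N))·Tr(M·ρ^{⊗N}) ≥ 1/(27N). -/

import Mathlib

open Matrix BigOperators
open scoped ComplexOrder

open Classical in
noncomputable def msqrt {n : Type*} [Fintype n] [DecidableEq n] (A : Matrix n n ℂ) :
    Matrix n n ℂ :=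
  if h : A.PosSemidef then
    (h.1.eigenvectorUnitary : Matrix n n ℂ) * diagonal ((↑) ∘ Real.sqrt ∘ h.1.eigenvalues) *
      (star h.1.eigenvectorUnitary : Matrix n n ℂ)
  else 0

noncomputable def traceNorm {n : Type*} [Fintype n] [DecidableEq n] (A : Matrix n n ℂ) : ℝ :=
  (msqrt (Aᴴ * A)).trace.re

noncomputable def fidelity {n : Type*} [Fintype n] [DecidableEq n] (ρ₀ ρ₁ : Matrix n n ℂ) : ℝ :=
  ((msqrt (msqrt ρ₀ * ρ₁ * msqrt ρ₀)).trace.re) ^ 2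

noncomputable def tensorPow {d : ℕ} (ρ : Matrix (Fin d) (Fin d) ℂ) (n : ℕ) :
    Matrix (Fin n → Fin d) (Fin n → Fin d) ℂ :=
  Matrix.of fun i j => ∏ k, ρ (i k) (j k)

/-!
A hybrid argument. Replacing the copies of `φ` by copies of `ρ` one at a time, each swap lowers
the acceptance probability of the effect `M` by at most the trace distance `T = ½‖ρ - φ‖₁`:
write `ρ - φ = Δ⁺ - Δ⁻`; the `Δ⁺` part can only raise `Tr(M ·)`, while the `Δ⁻` part lowers it
by at most `Tr Δ⁻`, which equals `T` because `Tr(ρ - φ) = 0`. Hence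
`Tr(M φ^{⊗N}) - Tr(M ρ^{⊗N}) ≤ N T = 2/9`, and the bound follows from
`0 ≤ Tr(M ρ^{⊗N})` and `Tr(M φ^{⊗N}) ≤ 1`.
-/

open scoped MatrixOrder

namespace Matrix

variable {n : Type*}

section Effect

variable [Fintype n] [DecidableEq n] {𝕜 : Type*} [RCLike 𝕜] {M P : Matrix n n 𝕜}

theorem PosSemidef.trace_mul_nonneg (hM : M.PosSemidef) (hP : P.PosSemidef) :
    0 ≤ (M * P).trace := by
  obtain ⟨B, rfl⟩ := CStarAlgebra.nonneg_iff_eq_star_mul_self.mp hM.nonneg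
  rw [mul_assoc, trace_mul_comm, mul_assoc, ← mul_assoc, star_eq_conjTranspose]
  exact (hP.mul_mul_conjTranspose_same B).trace_nonneg

theorem trace_mul_le_trace (hM : (1 - M).PosSemidef) (hP : P.PosSemidef) :
    (M * P).trace ≤ P.trace := by
  simpa [sub_mul] using hM.trace_mul_nonneg hP

end Effect

section TensorPi

variable {ι R : Type*} [Fintype ι]

def tensorPi [CommSemiring R] (σ : ι → Matrix n n R) : Matrix (ι → n) (ι → n) R :=
  of fun i j => ∏ k, σ k (i k) (j k)

theorem tensorPi_mul [Fintype n] [DecidableEq ι] [CommSemiring R] (σ τ : ι → Matrix n n R) :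
    tensorPi σ * tensorPi τ = tensorPi fun k => σ k * τ k := by
  ext i j
  simp only [tensorPi, mul_apply, of_apply, ← Finset.prod_mul_distrib]
  rw [Finset.prod_univ_sum, Fintype.piFinset_univ]

theorem conjTranspose_tensorPi [CommSemiring R] [StarRing R] (σ : ι → Matrix n n R) :
    (tensorPi σ)ᴴ = tensorPi fun k => (σ k)ᴴ := by
  ext i j
  simp only [tensorPi, conjTranspose_apply, of_apply, star_prod]

theorem trace_tensorPi [Fintype n] [DecidableEq ι] [CommSemiring R] (σ : ι → Matrix n n R) :
    (tensorPi σ).trace = ∏ k, (σ k).trace := by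
  simp only [trace, diag, tensorPi, of_apply]
  rw [Finset.prod_univ_sum, Fintype.piFinset_univ]

theorem trace_tensorPi_update [Fintype n] [DecidableEq ι] [CommSemiring R]
    {σ : ι → Matrix n n R} {e : ι} (hσ : ∀ k ≠ e, (σ k).trace = 1) (X : Matrix n n R) :
    (tensorPi (Function.update σ e X)).trace = X.trace := by
  rw [trace_tensorPi, ← Finset.mul_prod_erase _ _ (Finset.mem_univ e), Function.update_self,
    Finset.prod_eq_one fun k hk => ?_, mul_one]
  rw [Function.update_of_ne (Finset.ne_of_mem_erase hk), hσ k (Finset.ne_of_mem_erase hk)]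

theorem tensorPi_update_sub [DecidableEq ι] [CommRing R] (σ : ι → Matrix n n R) (e : ι)
    (X Y : Matrix n n R) :
    tensorPi (Function.update σ e (X - Y)) =
      tensorPi (Function.update σ e X) - tensorPi (Function.update σ e Y) := by
  have factor_e (Z : Matrix n n R) (i j : ι → n) :
      ∏ k, Function.update σ e Z k (i k) (j k) =
        Z (i e) (j e) * ∏ k ∈ Finset.univ.erase e, σ k (i k) (j k) := by
    rw [← Finset.mul_prod_erase _ _ (Finset.mem_univ e), Function.update_self]
    congr 1
    exact Finset.prod_congr rfl fun k hk => by
      rw [Function.update_of_ne (Finset.ne_of_mem_erase hk)]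
  ext i j
  simp only [tensorPi, sub_apply, of_apply, factor_e, sub_mul]

theorem PosSemidef.tensorPi [Fintype n] [DecidableEq n] [DecidableEq ι] {𝕜 : Type*}
    [RCLike 𝕜] {σ : ι → Matrix n n 𝕜} (hσ : ∀ k, (σ k).PosSemidef) : (tensorPi σ).PosSemidef := by
  choose B hB using fun k => CStarAlgebra.nonneg_iff_eq_star_mul_self.mp (hσ k).nonneg
  rw [show σ = fun k => (B k)ᴴ * B k from funext hB, ← tensorPi_mul,
    ← conjTranspose_tensorPi]
  exact posSemidef_conjTranspose_mul_self _

end TensorPi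

end Matrix

section TraceNorm

variable {n : Type*} [Fintype n] [DecidableEq n]

theorem Matrix.PosSemidef.msqrt_eq_sqrt {A : Matrix n n ℂ} (hA : A.PosSemidef) :
    msqrt A = CFC.sqrt A := by
  rw [msqrt, dif_pos hA, CFC.sqrt_eq_real_sqrt A hA.nonneg, cfcₙ_eq_cfc, hA.1.cfc_eq,
    IsHermitian.cfc, Unitary.conjStarAlgAut_apply]
  rfl

theorem traceNorm_eq_re_trace_abs (A : Matrix n n ℂ) : traceNorm A = (CFC.abs A).trace.re := by
  rw [traceNorm, (posSemidef_conjTranspose_mul_self A).msqrt_eq_sqrt, CFC.abs]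
  rfl

theorem Matrix.IsHermitian.re_trace_negPart_eq_half_traceNorm {A : Matrix n n ℂ}
    (hA : A.IsHermitian) (htr : A.trace = 0) : (A⁻).trace.re = traceNorm A / 2 := by
  have hsum : traceNorm A = (A⁺).trace.re + (A⁻).trace.re := by
    rw [traceNorm_eq_re_trace_abs, ← CFC.posPart_add_negPart A hA, trace_add, Complex.add_re]
  have hdiff : (A⁺).trace.re - (A⁻).trace.re = 0 := by
    rw [← Complex.sub_re, ← trace_sub, CFC.posPart_sub_negPart A hA, htr, Complex.zero_re]
  linarith

end TraceNorm

namespace Matrix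

variable {n : Type*} [Fintype n] [DecidableEq n]

theorem neg_half_traceNorm_le_re_trace_mul_tensorPi_update {ι : Type*} [Fintype ι]
    [DecidableEq ι] {M : Matrix (ι → n) (ι → n) ℂ} (hM : M.PosSemidef)
    (hM' : (1 - M).PosSemidef) {σ : ι → Matrix n n ℂ} {e : ι} (hσ : ∀ k ≠ e, (σ k).PosSemidef)
    (hσt : ∀ k ≠ e, (σ k).trace = 1) {Δ : Matrix n n ℂ} (hΔ : Δ.IsHermitian)
    (hΔt : Δ.trace = 0) :
    -(traceNorm Δ / 2) ≤ (M * tensorPi (Function.update σ e Δ)).trace.re := by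
  have hupd {X : Matrix n n ℂ} (hX : X.PosSemidef) :
      (tensorPi (Function.update σ e X)).PosSemidef :=
    PosSemidef.tensorPi <|
      (Function.forall_update_iff σ (p := fun _ Y => Y.PosSemidef)).mpr ⟨hX, hσ⟩
  have hpos := (Complex.nonneg_iff.mp <|
    hM.trace_mul_nonneg (hupd (CFC.posPart_nonneg Δ).posSemidef)).1
  have hneg := Complex.re_le_re <|
    trace_mul_le_trace hM' (hupd (CFC.negPart_nonneg Δ).posSemidef)
  rw [trace_tensorPi_update hσt, hΔ.re_trace_negPart_eq_half_traceNorm hΔt] at hneg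
  have hsplit : tensorPi (Function.update σ e Δ) =
      tensorPi (Function.update σ e Δ⁺) - tensorPi (Function.update σ e Δ⁻) := by
    rw [← tensorPi_update_sub, CFC.posPart_sub_negPart Δ hΔ]
  rw [hsplit, mul_sub, trace_sub, Complex.sub_re]
  linarith

theorem re_trace_mul_tensorPi_const_sub_le {N : ℕ} {M : Matrix (Fin N → n) (Fin N → n) ℂ}
    (hM : M.PosSemidef) (hM' : (1 - M).PosSemidef) {ρ φ : Matrix n n ℂ}
    (hρ : ρ.PosSemidef) (hρt : ρ.trace = 1) (hφ : φ.PosSemidef) (hφt : φ.trace = 1) :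
    (M * tensorPi fun _ => φ).trace.re - (M * tensorPi fun _ => ρ).trace.re ≤
      N * (traceNorm (ρ - φ) / 2) := by
  let hybrid (m : ℕ) : Fin N → Matrix n n ℂ := fun j => if (j : ℕ) < m then ρ else φ
  let f (m : ℕ) : ℝ := (M * tensorPi (hybrid m)).trace.re
  have hstep : ∀ m ∈ Finset.range N, f m - f (m + 1) ≤ traceNorm (ρ - φ) / 2 := by
    intro m hm
    let e : Fin N := ⟨m, Finset.mem_range.mp hm⟩
    have h0 : Function.update (hybrid m) e φ = hybrid m :=
      Function.update_eq_self_iff.mpr (by simp [hybrid, e])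
    have h1 : Function.update (hybrid m) e ρ = hybrid (m + 1) :=
      Function.update_eq_iff.mpr ⟨by simp [hybrid, e], fun j hj => by
        have : (j : ℕ) ≠ m := fun h => hj (Fin.ext h)
        simp only [hybrid, show (j : ℕ) < m + 1 ↔ (j : ℕ) < m by omega]⟩
    have key := neg_half_traceNorm_le_re_trace_mul_tensorPi_update hM hM'
      (σ := hybrid m) (e := e)
      (fun k _ => by dsimp only [hybrid]; split_ifs <;> assumption)
      (fun k _ => by dsimp only [hybrid]; split_ifs <;> assumption)
      (hρ.1.sub hφ.1) (by rw [trace_sub, hρt, hφt, sub_self])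
    rw [tensorPi_update_sub, mul_sub, trace_sub, Complex.sub_re, h0, h1] at key
    linarith
  have hsum := Finset.sum_le_card_nsmul _ _ _ hstep
  rw [Finset.sum_range_sub', Finset.card_range, nsmul_eq_mul] at hsum
  have hf0 : hybrid 0 = fun _ => φ := by simp [hybrid]
  have hfN : hybrid N = fun _ => ρ := funext fun j => if_pos j.isLt
  simpa only [f, hf0, hfN] using hsum

end Matrix

theorem tensorPow_eq_tensorPi {d : ℕ} (ρ : Matrix (Fin d) (Fin d) ℂ) (N : ℕ) :
    tensorPow ρ N = Matrix.tensorPi fun _ => ρ :=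
  rfl

/-- Quantitative no-go bound, mixed target state. -/
theorem no_go_mixed {d N : ℕ} (hN : 1 ≤ N)
    (ρ φ : Matrix (Fin d) (Fin d) ℂ)
    (hρ : ρ.PosSemidef) (hρt : ρ.trace = 1)
    (hφ : φ.PosSemidef) (hφt : φ.trace = 1)
    (hdist : (1 / 2) * traceNorm (ρ - φ) = 2 / (9 * N))
    (M : Matrix (Fin N → Fin d) (Fin N → Fin d) ℂ)
    (hM : M.PosSemidef) (hM' : (1 - M).PosSemidef) :
    (1 - ((M * tensorPow φ N).trace).re) +
        (1 / (9 * N)) * ((M * tensorPow ρ N).trace).re ≥ 1 / (27 * N) := by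
  have hgap := re_trace_mul_tensorPi_const_sub_le hM hM' hρ hρt hφ hφt
  have hacc : (M * tensorPow φ N).trace.re ≤ 1 := by
    have := Complex.re_le_re (trace_mul_le_trace hM' (PosSemidef.tensorPi fun _ => hφ))
    rwa [trace_tensorPi, Finset.prod_const, hφt, one_pow, Complex.one_re] at this
  have hrej : 0 ≤ (M * tensorPow ρ N).trace.re :=
    (Complex.nonneg_iff.mp (hM.trace_mul_nonneg (PosSemidef.tensorPi fun _ => hρ))).1
  rw [← tensorPow_eq_tensorPi, ← tensorPow_eq_tensorPi] at hgap
  have hN' : (1 : ℝ) ≤ N := by exact_mod_cast hN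
  have hNT : (N : ℝ) * (traceNorm (ρ - φ) / 2) = 2 / 9 := by
    rw [div_eq_inv_mul, ← one_div, hdist]; field_simp
  have hx : 1 / (9 * (N : ℝ)) ≤ 1 / 9 := by gcongr; linarith
  have hx0 : 0 ≤ 1 / (9 * (N : ℝ)) := by positivity
  rw [show 1 / (27 * (N : ℝ)) = 1 / (9 * N) / 3 by ring]
  nlinarith
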